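/- arXiv:2401.13145 — 2 statements merged into one kernel-verified Lean document; each statement's English description precedes it below -/
import Mathlib

section
/- Let 𝔹_P = {B ∈ Bor(C) : lim_{n→∞} n·ψ_n(B) = 0}, where ψ_n(B) = min{λ(B △ A) : A ∈ 𝔸_n}. Then: (1) 𝔹_P is a Boolean subalgebra of Bor(C); (2) for every B ∈ 𝔹_P and n < m, |φ_m(B)| ≤ ψ_n(B); (3) every B ∈ 𝔹_P is semibalanced. -/
open MeasureTheory Set Filter Topology
open scoped ENNReal

noncomputable section

/-- The Cantor set `{-1,1}^ℕ`, coded with `Bool` (`true ↔ 1`, `false ↔ -1`). -/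
abbrev Cantor : Type := ℕ → Bool

/-- `δ_n(x) = x_n ∈ {-1,1}`. -/
def delta (n : ℕ) (x : Cantor) : ℝ := if x n then 1 else -1

/-- The cylinder `⟨s⟩ = {x : x↾m = s}`. -/
def cyl {m : ℕ} (s : Fin m → Bool) : Set Cantor := {x | ∀ i : Fin m, x i.1 = s i}

/-- `φ_n(A) = ∫_A δ_n dμ`. -/
def phi (μ : Measure Cantor) (n : ℕ) (A : Set Cantor) : ℝ := ∫ x in A, delta n x ∂μ

/-- `μ` is the Haar (fair-coin product) measure on the Cantor set:
every cylinder of length `m` has measure `2^{-m}`. -/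
def IsHaar (μ : Measure Cantor) : Prop :=
  ∀ (m : ℕ) (s : Fin m → Bool), μ (cyl s) = (2 : ℝ≥0∞)⁻¹ ^ m

/-- `A` is `(t,ε)`-semibalanced: `|φ_r(A)| < ε/r` for all `r > t`. -/
def Semibalanced (μ : Measure Cantor) (t : ℕ) (ε : ℝ) (A : Set Cantor) : Prop :=
  ∀ r : ℕ, t < r → |phi μ r A| < ε / (r : ℝ)

/-- `A` is `(m,ε)`-balanced. -/
def BalancedAt (μ : Measure Cantor) (m : ℕ) (ε : ℝ) (A : Set Cantor) : Prop :=
  ∀ s : Fin m → Bool,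
    ((μ (A ∩ cyl s)).toReal / (μ (cyl s)).toReal < ε / (m : ℝ) ∨
      (μ (cyl s \ A)).toReal / (μ (cyl s)).toReal < ε / (m : ℝ)) ∧
    ∀ r : ℕ, m < r → |phi μ r (A ∩ cyl s)| / (μ (cyl s)).toReal < ε / (r : ℝ)

/-- `A` is `(m,t,ε)`-balanced. -/
def BalancedAtT (μ : Measure Cantor) (m t : ℕ) (ε : ℝ) (A : Set Cantor) : Prop :=
  ∀ s : Fin m → Bool,
    ((μ (A ∩ cyl s)).toReal / (μ (cyl s)).toReal < ε / (m : ℝ) ∨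
      (μ (cyl s \ A)).toReal / (μ (cyl s)).toReal < ε / (m : ℝ)) ∧
    ∀ r : ℕ, m < r → r ≤ t → |phi μ r (A ∩ cyl s)| / (μ (cyl s)).toReal < ε / (r : ℝ)

/-- `ψ_n(B) = min{λ(B △ A) : A ∈ 𝔸_n}`: distance of `B` to the finite algebra
generated by the length-`n` cylinders (whose elements are the unions of cylinders). -/
def psi (μ : Measure Cantor) (n : ℕ) (B : Set Cantor) : ℝ :=
  sInf (Set.range fun S : Set (Fin n → Bool) =>
    (μ (symmDiff B (⋃ s ∈ S, cyl s))).toReal)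

/-- Plebanek's algebra `𝔹_P = {B ∈ Bor(C) : n·ψ_n(B) → 0}`. -/
def BP (μ : Measure Cantor) : Set (Set Cantor) :=
  {B | MeasurableSet B ∧ Tendsto (fun n : ℕ => (n : ℝ) * psi μ n B) atTop (𝓝 0)}

/-!
Each length-`n` cylinder meets `{x_k = 1}` and `{x_k = -1}` in equal measure when `n ≤ k`, so
`φ_k` vanishes on `𝔸_n`; as `|φ_k(B) - φ_k(A)| ≤ λ(B △ A)`, this gives `|φ_k(B)| ≤ ψ_n(B)`.
`ψ_n` is invariant under complements and subadditive under unions, which makes `𝔹_P` an algebra,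
and `r |φ_r(B)| ≤ 2 (r - 1) ψ_{r-1}(B) → 0` makes every `B ∈ 𝔹_P` semibalanced.
-/

open scoped symmDiff

section Cylinders

variable {m : ℕ}

lemma mem_cyl_iff {s : Fin m → Bool} {x : Cantor} : x ∈ cyl s ↔ (fun i : Fin m => x i) = s :=
  funext_iff.symm

lemma mem_cyl_self (x : Cantor) : x ∈ cyl (fun i : Fin m => x i) := fun _ => rfl

lemma measurableSet_cyl (s : Fin m → Bool) : MeasurableSet (cyl s) := by
  have : cyl s = ⋂ i : Fin m, (fun x : Cantor => x i) ⁻¹' {s i} := by ext; simp [cyl]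
  rw [this]
  exact .iInter fun i => measurable_pi_apply _ (measurableSet_singleton _)

lemma measurableSet_biUnion_cyl (S : Set (Fin m → Bool)) : MeasurableSet (⋃ s ∈ S, cyl s) :=
  .biUnion S.to_countable fun s _ => measurableSet_cyl s

lemma disjoint_cyl {s t : Fin m → Bool} (h : s ≠ t) : Disjoint (cyl s) (cyl t) :=
  Set.disjoint_left.2 fun _ hs ht => h ((mem_cyl_iff.1 hs).symm.trans (mem_cyl_iff.1 ht))

lemma iUnion_cyl : ⋃ s : Fin m → Bool, cyl s = univ :=
  eq_univ_of_forall fun x => mem_iUnion.2 ⟨_, mem_cyl_self x⟩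

lemma compl_biUnion_cyl (S : Set (Fin m → Bool)) : (⋃ s ∈ S, cyl s)ᶜ = ⋃ s ∈ Sᶜ, cyl s := by
  ext x
  simp only [mem_compl_iff, mem_iUnion, mem_cyl_iff, exists_prop, exists_eq_right']

lemma cyl_snoc (s : Fin m → Bool) (b : Bool) :
    cyl (Fin.snoc s b : Fin (m + 1) → Bool) = cyl s ∩ {x | x m = b} := by
  ext x
  simp only [cyl, Fin.forall_fin_succ', Fin.snoc_castSucc, Fin.snoc_last, mem_inter_iff,
    mem_ofPred_eq, Fin.val_castSucc, Fin.val_last]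

lemma cyl_eq_union_snoc (s : Fin m → Bool) :
    cyl s = cyl (Fin.snoc s true : Fin (m + 1) → Bool) ∪ cyl (Fin.snoc s false) := by
  rw [cyl_snoc, cyl_snoc, ← inter_union_distrib_left]
  ext x
  cases x m <;> simp

lemma snoc_true_ne_snoc_false (s : Fin m → Bool) :
    (Fin.snoc s true : Fin (m + 1) → Bool) ≠ Fin.snoc s false := fun h => by
  simpa using congrFun h (Fin.last m)

end Cylinders

lemma measurableSet_coord_eq (k : ℕ) (b : Bool) : MeasurableSet {x : Cantor | x k = b} :=
  measurableSet_eq_fun (measurable_pi_apply k) measurable_const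

lemma abs_delta (k : ℕ) (x : Cantor) : |delta k x| = 1 := by
  unfold delta; split <;> simp

lemma integrable_delta (μ : Measure Cantor) [IsFiniteMeasure μ] (k : ℕ) :
    Integrable (delta k) μ :=
  .of_bound ((measurable_of_finite fun b : Bool => if b then (1 : ℝ) else -1).comp
    (measurable_pi_apply k)).aestronglyMeasurable 1 (.of_forall fun x => (abs_delta k x).le)

section Phi

variable {μ : Measure Cantor} [IsFiniteMeasure μ]

lemma phi_eq_measureReal_sub {A : Set Cantor} (hA : MeasurableSet A) (k : ℕ) :
    phi μ k A = μ.real (A ∩ {x | x k = true}) - μ.real (A ∩ {x | x k = false}) := by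
  have hdiff : A \ {x | x k = true} = A ∩ {x | x k = false} := by ext; simp
  rw [phi, ← integral_inter_add_sdiff (measurableSet_coord_eq k true)
      (integrable_delta μ k).integrableOn, hdiff,
    setIntegral_congr_fun (hA.inter (measurableSet_coord_eq k true)) (g := fun _ => 1)
      fun x hx => by simp [delta, show x k = true from hx.2],
    setIntegral_congr_fun (hA.inter (measurableSet_coord_eq k false)) (g := fun _ => -1)
      fun x hx => by simp [delta, show x k = false from hx.2]]
  simp [sub_eq_add_neg]

lemma abs_phi_sub_phi_le {A B : Set Cantor} (hA : MeasurableSet A) (hB : MeasurableSet B)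
    (k : ℕ) : |phi μ k B - phi μ k A| ≤ μ.real (B ∆ A) := by
  have hbound (s : Set Cantor) : |∫ x in s, delta k x ∂μ| ≤ μ.real s := by
    simpa using norm_setIntegral_le_of_norm_le_const (measure_lt_top μ s) (C := 1)
      (f := delta k) fun x _ => (abs_delta k x).le
  have hsplit (C D : Set Cantor) (hD : MeasurableSet D) :
      phi μ k C = (∫ x in C ∩ D, delta k x ∂μ) + ∫ x in C \ D, delta k x ∂μ :=
    (integral_inter_add_sdiff hD (integrable_delta μ k).integrableOn).symm
  calc |phi μ k B - phi μ k A|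
      = |(∫ x in B \ A, delta k x ∂μ) - ∫ x in A \ B, delta k x ∂μ| := by
        rw [hsplit B A hA, hsplit A B hB, inter_comm]; ring_nf
    _ ≤ |∫ x in B \ A, delta k x ∂μ| + |∫ x in A \ B, delta k x ∂μ| := abs_sub _ _
    _ ≤ μ.real (B \ A) + μ.real (A \ B) := add_le_add (hbound _) (hbound _)
    _ = μ.real (B ∆ A) := (measureReal_symmDiff_eq hB hA).symm

end Phi

section Psi

variable {μ : Measure Cantor} (n : ℕ)

lemma psi_nonneg (B : Set Cantor) : 0 ≤ psi μ n B :=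
  le_csInf (range_nonempty _) (by rintro _ ⟨S, rfl⟩; exact ENNReal.toReal_nonneg)

lemma psi_le_measureReal_symmDiff (B : Set Cantor) (S : Set (Fin n → Bool)) :
    psi μ n B ≤ μ.real (B ∆ ⋃ s ∈ S, cyl s) :=
  csInf_le ⟨0, by rintro _ ⟨T, rfl⟩; exact ENNReal.toReal_nonneg⟩ ⟨S, rfl⟩

lemma exists_psi_eq_measureReal_symmDiff (B : Set Cantor) :
    ∃ S : Set (Fin n → Bool), psi μ n B = μ.real (B ∆ ⋃ s ∈ S, cyl s) := by
  obtain ⟨S, hS⟩ := (range_nonempty _).csInf_mem (finite_range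
    fun S : Set (Fin n → Bool) => (μ (B ∆ ⋃ s ∈ S, cyl s)).toReal)
  exact ⟨S, hS.symm⟩

lemma psi_univ : psi μ n univ = 0 :=
  le_antisymm (by simpa [iUnion_cyl] using psi_le_measureReal_symmDiff (μ := μ) n univ univ)
    (psi_nonneg n _)

lemma psi_compl (B : Set Cantor) : psi μ n Bᶜ = psi μ n B := by
  have hcompl (S : Set (Fin n → Bool)) : Bᶜ ∆ ⋃ s ∈ S, cyl s = B ∆ ⋃ s ∈ Sᶜ, cyl s := by
    rw [← compl_biUnion_cyl, ← compl_symmDiff_compl, compl_compl]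
  unfold psi
  simp_rw [hcompl]
  exact congrArg sInf (compl_surjective.range_comp
    fun S : Set (Fin n → Bool) => (μ (B ∆ ⋃ s ∈ S, cyl s)).toReal)

lemma psi_union_le [IsFiniteMeasure μ] (A B : Set Cantor) :
    psi μ n (A ∪ B) ≤ psi μ n A + psi μ n B := by
  obtain ⟨S, hS⟩ := exists_psi_eq_measureReal_symmDiff (μ := μ) n A
  obtain ⟨T, hT⟩ := exists_psi_eq_measureReal_symmDiff (μ := μ) n B
  have hsub : (A ∪ B) ∆ ⋃ s ∈ S ∪ T, cyl s
      ⊆ (A ∆ ⋃ s ∈ S, cyl s) ∪ B ∆ ⋃ s ∈ T, cyl s := by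
    rw [biUnion_union]
    intro x
    simp only [mem_symmDiff, mem_union]
    tauto
  calc psi μ n (A ∪ B) ≤ μ.real ((A ∪ B) ∆ ⋃ s ∈ S ∪ T, cyl s) :=
        psi_le_measureReal_symmDiff n _ _
    _ ≤ μ.real ((A ∆ ⋃ s ∈ S, cyl s) ∪ B ∆ ⋃ s ∈ T, cyl s) := measureReal_mono hsub
    _ ≤ psi μ n A + psi μ n B := hS ▸ hT ▸ measureReal_union_le _ _

end Psi

namespace IsHaar

variable {μ : Measure Cantor}

lemma measure_cyl_inter_coord_eq (hμ : IsHaar μ) {n k : ℕ} (hnk : n ≤ k) (s : Fin n → Bool)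
    (b : Bool) : μ (cyl s ∩ {x | x k = b}) = 2⁻¹ ^ (n + 1) := by
  obtain ⟨d, rfl⟩ := Nat.exists_eq_add_of_le hnk
  clear hnk
  induction d generalizing n with
  | zero => rw [add_zero, ← cyl_snoc, hμ]
  | succ d ih =>
    rw [cyl_eq_union_snoc s, union_inter_distrib_right, measure_union
      ((disjoint_cyl (snoc_true_ne_snoc_false s)).mono inter_subset_left inter_subset_left)
      ((measurableSet_cyl _).inter (measurableSet_coord_eq _ b)),
      ← add_assoc, add_right_comm, ih (Fin.snoc s true), ih (Fin.snoc s false), ← two_mul,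
      pow_succ' _ (n + 1), ← mul_assoc, ENNReal.mul_inv_cancel two_ne_zero ENNReal.ofNat_ne_top,
      one_mul]

lemma phi_biUnion_cyl_eq_zero [IsFiniteMeasure μ] (hμ : IsHaar μ) {n k : ℕ} (hnk : n ≤ k)
    (S : Set (Fin n → Bool)) : phi μ k (⋃ s ∈ S, cyl s) = 0 := by
  have hhalf (b : Bool) :
      μ ((⋃ s ∈ S, cyl s) ∩ {x | x k = b}) = ∑' _ : S, (2 : ℝ≥0∞)⁻¹ ^ (n + 1) := by
    rw [iUnion₂_inter, measure_biUnion S.to_countable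
      (fun s _ t _ hst => (disjoint_cyl hst).mono inter_subset_left inter_subset_left)
      fun s _ => (measurableSet_cyl s).inter (measurableSet_coord_eq k b)]
    exact tsum_congr fun s => hμ.measure_cyl_inter_coord_eq hnk s b
  rw [phi_eq_measureReal_sub (measurableSet_biUnion_cyl S),
    measureReal_def, measureReal_def, hhalf, hhalf, sub_self]

lemma abs_phi_le_psi [IsFiniteMeasure μ] (hμ : IsHaar μ) {B : Set Cantor} (hB : MeasurableSet B)
    {n k : ℕ} (hnk : n ≤ k) : |phi μ k B| ≤ psi μ n B :=
  le_csInf (range_nonempty _) <| by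
    rintro _ ⟨S, rfl⟩
    simpa [hμ.phi_biUnion_cyl_eq_zero hnk, measureReal_def] using
      abs_phi_sub_phi_le (μ := μ) (measurableSet_biUnion_cyl S) hB k

end IsHaar

section PlebanekAlgebra

variable {μ : Measure Cantor}

lemma univ_mem_BP : univ ∈ BP μ :=
  ⟨.univ, by simpa only [psi_univ, mul_zero] using tendsto_const_nhds⟩

lemma compl_mem_BP {B : Set Cantor} (hB : B ∈ BP μ) : Bᶜ ∈ BP μ :=
  ⟨hB.1.compl, by simpa only [psi_compl] using hB.2⟩

lemma union_mem_BP [IsFiniteMeasure μ] {A B : Set Cantor} (hA : A ∈ BP μ) (hB : B ∈ BP μ) :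
    A ∪ B ∈ BP μ := by
  refine ⟨hA.1.union hB.1, squeeze_zero (fun n => mul_nonneg n.cast_nonneg (psi_nonneg n _))
    (fun n => ?_) (by simpa using hA.2.add hB.2)⟩
  rw [← mul_add]
  exact mul_le_mul_of_nonneg_left (psi_union_le n A B) n.cast_nonneg

lemma semibalanced_of_tendsto {A : Set Cantor}
    (h : Tendsto (fun r : ℕ => (r : ℝ) * |phi μ r A|) atTop (𝓝 0)) {ε : ℝ} (hε : 0 < ε) :
    ∃ t, Semibalanced μ t ε A := by
  obtain ⟨t, ht⟩ := eventually_atTop.1 (h.eventually (eventually_lt_nhds hε))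
  refine ⟨t, fun r hr => ?_⟩
  rw [lt_div_iff₀ (by exact_mod_cast (t.zero_le.trans_lt hr)), mul_comm]
  exact ht r hr.le

lemma IsHaar.tendsto_mul_abs_phi [IsFiniteMeasure μ] (hμ : IsHaar μ) {B : Set Cantor}
    (hB : B ∈ BP μ) : Tendsto (fun r : ℕ => (r : ℝ) * |phi μ r B|) atTop (𝓝 0) := by
  rw [← tendsto_add_atTop_iff_nat 1]
  refine squeeze_zero' (.of_forall fun r => by positivity)
    (eventually_atTop.2 ⟨1, fun r hr => ?_⟩) (by simpa using hB.2.const_mul 2)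
  have hr : ((r + 1 : ℕ) : ℝ) ≤ 2 * r := by push_cast; linarith [(Nat.one_le_cast (α := ℝ)).2 hr]
  calc ((r + 1 : ℕ) : ℝ) * |phi μ (r + 1) B| ≤ (2 * r) * psi μ r B :=
        mul_le_mul hr (hμ.abs_phi_le_psi hB.1 r.le_succ) (abs_nonneg _) (by positivity)
    _ = 2 * (r * psi μ r B) := mul_assoc _ _ _

end PlebanekAlgebra

/-- `𝔹_P` is a Boolean subalgebra of `Bor(C)`; `|φ_m(B)| ≤ ψ_n(B)` for `B ∈ 𝔹_P`
and `n < m`; and every `B ∈ 𝔹_P` is semibalanced. -/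
theorem stmt18 (μ : Measure Cantor) [IsProbabilityMeasure μ] (hμ : IsHaar μ) :
    (Set.univ ∈ BP μ ∧ (∀ B ∈ BP μ, Bᶜ ∈ BP μ) ∧
      ∀ A ∈ BP μ, ∀ B ∈ BP μ, A ∪ B ∈ BP μ) ∧
    (∀ B ∈ BP μ, ∀ n k : ℕ, n < k → |phi μ k B| ≤ psi μ n B) ∧
    (∀ B ∈ BP μ, ∀ ε : ℝ, 0 < ε → ∃ t : ℕ, Semibalanced μ t ε B) :=
  ⟨⟨univ_mem_BP, fun _ => compl_mem_BP, fun _ hA _ hB => union_mem_BP hA hB⟩,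
    fun _ hB _ _ hnk => hμ.abs_phi_le_psi hB.1 hnk.le,
    fun _ hB _ hε => semibalanced_of_tendsto (hμ.tendsto_mul_abs_phi hB) hε⟩
end
end

section
/- The set B = ⋃_{k=2}^∞ ⟨s_k⟩, where s_k ∈ {-1,1}^k is the sequence (−1,…,−1,1,1) (k−2 entries −1 followed by two 1's), satisfies: (1) n·ψ_n(B) = n/2^n → 0 (so B ∈ 𝔹_P); (2) B is not balanced, because for s'_k = (−1,…,−1,1) ∈ {-1,1}^k one has λ(B ∩ ⟨s'_k⟩)/λ(⟨s'_k⟩) = λ(⟨s'_k⟩ \ B)/λ(⟨s'_k⟩) = 1/2 for every k ≥ 2. -/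
open MeasureTheory Set Filter Topology
open scoped ENNReal

noncomputable section

/-- `s_k = (-1,…,-1,1,1) ∈ {-1,1}^k` (`k-2` entries `-1`, then two `1`s);
`Bool`-coded with `true ↔ 1`. -/
def sk (k : ℕ) : Fin k → Bool := fun i => decide (k ≤ i.1 + 2)

/-- `s'_k = (-1,…,-1,1) ∈ {-1,1}^k`. -/
def sk' (k : ℕ) : Fin k → Bool := fun i => decide (i.1 + 1 = k)

/-- `B = ⋃_{k≥2} ⟨s_k⟩`. -/
def Bset : Set Cantor := ⋃ (k : ℕ) (_ : 2 ≤ k), cyl (sk k)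


lemma measurable_cyl {m : ℕ} (s : Fin m → Bool) : MeasurableSet (cyl s) := by
  have h : cyl s = ⋂ i : Fin m, (fun x : Cantor => x i.1) ⁻¹' {s i} := by
    ext x; simp [cyl]
  rw [h]
  exact MeasurableSet.iInter fun i => (measurable_pi_apply (i.1 : ℕ)) (measurableSet_singleton _)

lemma mem_cyl_sk {x : Cantor} {k : ℕ} :
    x ∈ cyl (sk k) ↔ ∀ i, i < k → (x i = true ↔ k ≤ i + 2) := by
  simp only [cyl, sk, Set.mem_setOf_eq, Fin.forall_iff]
  refine forall_congr' fun i => forall_congr' fun hi => ?_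
  rw [Bool.eq_iff_iff, decide_eq_true_iff]

lemma mem_cyl_sk' {x : Cantor} {k : ℕ} :
    x ∈ cyl (sk' k) ↔ ∀ i, i < k → (x i = true ↔ i + 1 = k) := by
  simp only [cyl, sk', Set.mem_setOf_eq, Fin.forall_iff]
  refine forall_congr' fun i => forall_congr' fun hi => ?_
  rw [Bool.eq_iff_iff, decide_eq_true_iff]

lemma mem_Bset {x : Cantor} :
    x ∈ Bset ↔ ∃ k, 2 ≤ k ∧ ∀ i, i < k → (x i = true ↔ k ≤ i + 2) := by
  simp only [Bset, Set.mem_iUnion, mem_cyl_sk, exists_prop]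

lemma sk_disj {k l : ℕ} (hk : 2 ≤ k) (hl : 2 ≤ l) (hne : k ≠ l) :
    Disjoint (cyl (sk k)) (cyl (sk l)) := by
  rw [Set.disjoint_left]
  intro x hx hx'
  rw [mem_cyl_sk] at hx hx'
  rcases Nat.lt_or_ge k l with h | h
  · have h1 : x (k - 2) = true := (hx (k - 2) (by omega)).2 (by omega)
    have h2 := (hx' (k - 2) (by omega)).1 h1
    omega
  · have h1 : x (l - 2) = true := (hx' (l - 2) (by omega)).2 (by omega)
    have h2 := (hx (l - 2) (by omega)).1 h1
    omega

def Btail (m : ℕ) : Set Cantor := ⋃ (k : ℕ) (_ : m ≤ k), cyl (sk k)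

lemma Bset_eq : Bset = Btail 2 := rfl

lemma mem_Btail {x : Cantor} {m : ℕ} :
    x ∈ Btail m ↔ ∃ k, m ≤ k ∧ x ∈ cyl (sk k) := by
  simp [Btail]

lemma Btail_eq (m : ℕ) : Btail m = ⋃ j : ℕ, cyl (sk (m + j)) := by
  ext x
  simp only [mem_Btail, Set.mem_iUnion]
  constructor
  · rintro ⟨k, hk, h⟩; exact ⟨k - m, by rwa [Nat.add_sub_cancel' hk]⟩
  · rintro ⟨j, h⟩; exact ⟨m + j, Nat.le_add_right _ _, h⟩

lemma measurable_Btail (m : ℕ) : MeasurableSet (Btail m) :=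
  MeasurableSet.biUnion (Set.to_countable _) fun _ _ => measurable_cyl _

lemma measurable_Bset : MeasurableSet Bset :=
  MeasurableSet.biUnion (Set.to_countable _) fun _ _ => measurable_cyl _

lemma two_mul_inv_pow (n : ℕ) : (2 : ℝ≥0∞) * 2⁻¹ ^ (n + 1) = 2⁻¹ ^ n := by
  rw [pow_succ', ← mul_assoc, ENNReal.mul_inv_cancel (by norm_num) (by norm_num), one_mul]

lemma two_halves (n : ℕ) : (2 : ℝ≥0∞)⁻¹ ^ (n + 1) + 2⁻¹ ^ (n + 1) = 2⁻¹ ^ n := by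
  rw [← two_mul, two_mul_inv_pow]

lemma inv_pow_ne_top (n : ℕ) : (2 : ℝ≥0∞)⁻¹ ^ n ≠ ⊤ :=
  ENNReal.pow_ne_top (by simp)

lemma meas_Btail {μ : Measure Cantor} (hμ : IsHaar μ) {m : ℕ} (hm : 2 ≤ m) :
    μ (Btail m) = 2 * 2⁻¹ ^ m := by
  rw [Btail_eq, measure_iUnion ?_ fun j => measurable_cyl _]
  · calc ∑' j : ℕ, μ (cyl (sk (m + j)))
        = ∑' j : ℕ, (2 : ℝ≥0∞)⁻¹ ^ m * 2⁻¹ ^ j := tsum_congr fun j => by rw [hμ, pow_add]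
      _ = 2⁻¹ ^ m * (1 - 2⁻¹)⁻¹ := by rw [ENNReal.tsum_mul_left, ENNReal.tsum_geometric]
      _ = 2 * 2⁻¹ ^ m := by rw [ENNReal.one_sub_inv_two, inv_inv, mul_comm]
  · intro i j hij
    exact sk_disj (by omega) (by omega) (by omega)

lemma Bset_inter_sk' {n : ℕ} (hn : 1 ≤ n) :
    Bset ∩ cyl (sk' n) = cyl (sk (n + 1)) := by
  ext x
  simp only [Set.mem_inter_iff, mem_Bset, mem_cyl_sk', mem_cyl_sk]
  constructor
  · rintro ⟨⟨k, hk2, hk⟩, hu⟩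
    have hkn : k = n + 1 := by
      by_contra hne
      rcases Nat.lt_or_ge k (n + 1) with h | h
      · have h1 : x (k - 2) = true := (hk (k - 2) (by omega)).2 (by omega)
        have h2 := (hu (k - 2) (by omega)).1 h1
        omega
      · have h1 : x (n - 1) = true := (hu (n - 1) (by omega)).2 (by omega)
        have h2 := (hk (n - 1) (by omega)).1 h1
        omega
    subst hkn
    exact hk
  · intro h
    refine ⟨⟨n + 1, by omega, h⟩, fun i hi => ?_⟩
    rw [h i (by omega)]
    omega

lemma mem_cyl_false {x : Cantor} {n : ℕ} :
    x ∈ cyl (fun _ : Fin n => false) ↔ ∀ i, i < n → x i = false := by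
  simp only [cyl, Set.mem_setOf_eq, Fin.forall_iff]

lemma Bset_inter_false {n : ℕ} (hn : 1 ≤ n) :
    Bset ∩ cyl (fun _ : Fin n => false) = Btail (n + 2) := by
  ext x
  simp only [Set.mem_inter_iff, mem_Bset, mem_cyl_false, mem_Btail, mem_cyl_sk]
  constructor
  · rintro ⟨⟨k, hk2, hk⟩, hf⟩
    refine ⟨k, ?_, hk⟩
    by_contra hlt
    have h1 : x (k - 2) = true := (hk (k - 2) (by omega)).2 (by omega)
    have h2 : x (k - 2) = false := hf (k - 2) (by omega)
    simp [h1] at h2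
  · rintro ⟨k, hk, h⟩
    refine ⟨⟨k, by omega, h⟩, fun i hi => ?_⟩
    have h2 : ¬(x i = true) := fun ht => by have := (h i (by omega)).1 ht; omega
    simpa using h2

lemma cyl_inj {n : ℕ} {s t : Fin n → Bool} {x : Cantor} (hs : x ∈ cyl s) (ht : x ∈ cyl t) :
    s = t :=
  funext fun i => (hs i).symm.trans (ht i)

lemma measurable_biUnion_cyl {n : ℕ} (S : Set (Fin n → Bool)) :
    MeasurableSet (⋃ s ∈ S, cyl s) :=
  MeasurableSet.biUnion (Set.to_countable _) fun s _ => measurable_cyl s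

lemma biUnion_inter_cyl_of_not_mem {n : ℕ} {S : Set (Fin n → Bool)} {t : Fin n → Bool}
    (hT : t ∉ S) : (⋃ s ∈ S, cyl s) ∩ cyl t = ∅ := by
  rw [Set.eq_empty_iff_forall_notMem]
  rintro x ⟨hxA, hxt⟩
  rw [Set.mem_iUnion₂] at hxA
  obtain ⟨s, hs, hxs⟩ := hxA
  exact hT (cyl_inj hxs hxt ▸ hs)

lemma symmDiff_inter_meas {μ : Measure Cantor} [IsProbabilityMeasure μ] (hμ : IsHaar μ)
    {n : ℕ} (S : Set (Fin n → Bool)) (w : Fin n → Bool)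
    (hw : μ (Bset ∩ cyl w) = 2⁻¹ ^ (n + 1)) :
    μ (symmDiff Bset (⋃ s ∈ S, cyl s) ∩ cyl w) = 2⁻¹ ^ (n + 1) := by
  set A := ⋃ s ∈ S, cyl s with hA
  by_cases hwS : w ∈ S
  · have hsub : cyl w ⊆ A := Set.subset_biUnion_of_mem hwS
    have h1 : symmDiff Bset A ∩ cyl w = cyl w \ (Bset ∩ cyl w) := by
      ext x
      simp only [Set.mem_symmDiff, Set.mem_inter_iff, Set.mem_diff]
      constructor
      · rintro ⟨(⟨hB, hA'⟩ | ⟨hA', hB⟩), hxw⟩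
        · exact absurd (hsub hxw) hA'
        · exact ⟨hxw, fun hc => hB hc.1⟩
      · rintro ⟨hxw, hB⟩
        exact ⟨Or.inr ⟨hsub hxw, fun hc => hB ⟨hc, hxw⟩⟩, hxw⟩
    rw [h1, measure_diff Set.inter_subset_right
        ((measurable_Bset.inter (measurable_cyl w)).nullMeasurableSet)
        (measure_ne_top μ _), hw, hμ n w]
    exact ENNReal.sub_eq_of_eq_add (inv_pow_ne_top _) (two_halves n).symm
  · have hd : A ∩ cyl w = ∅ := biUnion_inter_cyl_of_not_mem hwS
    have h2 : symmDiff Bset A ∩ cyl w = Bset ∩ cyl w := by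
      ext x
      simp only [Set.mem_symmDiff, Set.mem_inter_iff]
      constructor
      · rintro ⟨(⟨hB, _⟩ | ⟨hA', _⟩), hxw⟩
        · exact ⟨hB, hxw⟩
        · exact absurd (show x ∈ A ∩ cyl w from ⟨hA', hxw⟩) (by simp [hd])
      · rintro ⟨hB, hxw⟩
        refine ⟨Or.inl ⟨hB, fun hA' => ?_⟩, hxw⟩
        have : x ∈ A ∩ cyl w := ⟨hA', hxw⟩
        simp [hd] at this
    rw [h2, hw]

lemma psi_lower {μ : Measure Cantor} [IsProbabilityMeasure μ] (hμ : IsHaar μ)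
    {n : ℕ} (hn : 1 ≤ n) (S : Set (Fin n → Bool)) :
    (2 : ℝ≥0∞)⁻¹ ^ n ≤ μ (symmDiff Bset (⋃ s ∈ S, cyl s)) := by
  set A := ⋃ s ∈ S, cyl s with hA
  set X := symmDiff Bset A with hX
  have hBt : μ (Bset ∩ cyl (fun _ : Fin n => false)) = 2⁻¹ ^ (n + 1) := by
    rw [Bset_inter_false hn, meas_Btail hμ (by omega), two_mul_inv_pow]
  have hBu : μ (Bset ∩ cyl (sk' n)) = 2⁻¹ ^ (n + 1) := by
    rw [Bset_inter_sk' hn, hμ]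
  have htu : Disjoint (cyl (fun _ : Fin n => false)) (cyl (sk' n)) := by
    rw [Set.disjoint_left]
    intro x hxt hxu
    have h1 : x (n - 1) = false := mem_cyl_false.1 hxt (n - 1) (by omega)
    have h2 : x (n - 1) = true := (mem_cyl_sk'.1 hxu (n - 1) (by omega)).2 (by omega)
    simp [h1] at h2
  have hXmeas : MeasurableSet X := measurable_Bset.symmDiff (measurable_biUnion_cyl S)
  have key : μ (X ∩ cyl (fun _ : Fin n => false) ∪ X ∩ cyl (sk' n)) = 2⁻¹ ^ n := by
    rw [measure_union (htu.mono Set.inter_subset_right Set.inter_subset_right)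
        (hXmeas.inter (measurable_cyl _)),
      symmDiff_inter_meas hμ S _ hBt, symmDiff_inter_meas hμ S _ hBu, two_halves]
  calc (2 : ℝ≥0∞)⁻¹ ^ n = μ (X ∩ cyl (fun _ : Fin n => false) ∪ X ∩ cyl (sk' n)) := key.symm
    _ ≤ μ X := measure_mono (Set.union_subset Set.inter_subset_left Set.inter_subset_left)

lemma symmDiff_S0 {n : ℕ} (hn : 1 ≤ n) :
    symmDiff Bset (⋃ s ∈ {s : Fin n → Bool | cyl s ⊆ Bset}, cyl s) = Btail (n + 1) := by
  have hsub : (⋃ s ∈ {s : Fin n → Bool | cyl s ⊆ Bset}, cyl s) ⊆ Bset :=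
    Set.iUnion₂_subset fun s hs => hs
  rw [symmDiff_of_ge hsub]
  ext x
  constructor
  · rintro ⟨hxB, hxA⟩
    rw [mem_Bset] at hxB
    obtain ⟨k, hk2, hk⟩ := hxB
    rw [mem_Btail]
    refine ⟨k, ?_, mem_cyl_sk.2 hk⟩
    by_contra hlt
    have hs : cyl (fun i : Fin n => x i.1) ⊆ Bset := by
      intro y hy
      rw [mem_Bset]
      exact ⟨k, hk2, fun i hi => by
        rw [show y i = x i from hy ⟨i, by omega⟩]; exact hk i hi⟩
    exact hxA (Set.mem_biUnion hs (fun i => rfl))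
  · intro hx
    rw [mem_Btail] at hx
    obtain ⟨k, hk1, hk⟩ := hx
    rw [mem_cyl_sk] at hk
    refine ⟨mem_Bset.2 ⟨k, by omega, hk⟩, fun hxA => ?_⟩
    rw [Set.mem_iUnion₂] at hxA
    obtain ⟨s, hsB, hxs⟩ := hxA
    set y : Cantor := fun i => if i < n then x i else false with hy
    have hys : y ∈ cyl s := fun i => by
      simp only [hy, if_pos i.2]; exact hxs i
    have hyB := hsB hys
    rw [mem_Bset] at hyB
    obtain ⟨l, hl2, hl⟩ := hyB
    have hyt : ∀ i, y i = true → i + 1 = n ∧ k = n + 1 := by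
      intro i hi
      have hin : i < n := by
        by_contra h
        simp only [hy, if_neg h] at hi
        exact Bool.false_ne_true hi
      have hxi : x i = true := by simpa only [hy, if_pos hin] using hi
      have := (hk i (by omega)).1 hxi
      omega
    have h1 := hyt (l - 2) ((hl (l - 2) (by omega)).2 (by omega))
    have h2 := hyt (l - 1) ((hl (l - 1) (by omega)).2 (by omega))
    omega

lemma psi_eq {μ : Measure Cantor} [IsProbabilityMeasure μ] (hμ : IsHaar μ)
    {n : ℕ} (hn : 1 ≤ n) : psi μ n Bset = (2 : ℝ)⁻¹ ^ n := by
  have hk : ((2 : ℝ≥0∞)⁻¹ ^ n).toReal = (2 : ℝ)⁻¹ ^ n := by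
    simp [ENNReal.toReal_pow, ENNReal.toReal_inv]
  apply le_antisymm
  · apply csInf_le
    · exact ⟨0, by rintro y ⟨S, rfl⟩; exact ENNReal.toReal_nonneg⟩
    · refine ⟨{s : Fin n → Bool | cyl s ⊆ Bset}, ?_⟩
      show (μ (symmDiff Bset (⋃ s ∈ {s : Fin n → Bool | cyl s ⊆ Bset}, cyl s))).toReal = _
      rw [symmDiff_S0 hn, meas_Btail hμ (by omega), two_mul_inv_pow, hk]
  · apply le_csInf (Set.range_nonempty _)
    rintro y ⟨S, rfl⟩
    rw [← hk]
    exact ENNReal.toReal_mono (measure_ne_top μ _) (psi_lower hμ hn S)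

lemma density {μ : Measure Cantor} [IsProbabilityMeasure μ] (hμ : IsHaar μ)
    {k : ℕ} (hk : 1 ≤ k) :
    (μ (Bset ∩ cyl (sk' k))).toReal / (μ (cyl (sk' k))).toReal = 1 / 2 ∧
    (μ (cyl (sk' k) \ Bset)).toReal / (μ (cyl (sk' k))).toReal = 1 / 2 := by
  have h1 : μ (Bset ∩ cyl (sk' k)) = 2⁻¹ ^ (k + 1) := by rw [Bset_inter_sk' hk, hμ]
  have h2 : μ (cyl (sk' k) \ Bset) = 2⁻¹ ^ (k + 1) := by
    have hd : cyl (sk' k) \ Bset = cyl (sk' k) \ (Bset ∩ cyl (sk' k)) :=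
      (Set.diff_inter_self_eq_diff).symm
    rw [hd, measure_diff Set.inter_subset_right
        ((measurable_Bset.inter (measurable_cyl _)).nullMeasurableSet) (measure_ne_top μ _),
      h1, hμ]
    exact ENNReal.sub_eq_of_eq_add (inv_pow_ne_top _) (two_halves k).symm
  have hr : ((2 : ℝ≥0∞)⁻¹ ^ (k + 1)).toReal / ((2 : ℝ≥0∞)⁻¹ ^ k).toReal = 1 / 2 := by
    simp only [ENNReal.toReal_pow, ENNReal.toReal_inv, ENNReal.toReal_ofNat]
    rw [pow_succ, mul_comm, mul_div_assoc, div_self (pow_ne_zero _ (by norm_num)), mul_one]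
    norm_num
  exact ⟨by rw [h1, hμ]; exact hr, by rw [h2, hμ]; exact hr⟩

/-- `n·ψ_n(B) = n/2^n → 0`, so `B ∈ 𝔹_P`; but for every `k ≥ 2` both relative
densities of `B` on `⟨s'_k⟩` equal `1/2`, so `B` is not balanced. -/
theorem stmt19 (μ : Measure Cantor) [IsProbabilityMeasure μ] (hμ : IsHaar μ) :
    (∀ n : ℕ, (n : ℝ) * psi μ n Bset = (n : ℝ) / 2 ^ n) ∧
    Tendsto (fun n : ℕ => (n : ℝ) * psi μ n Bset) atTop (𝓝 0) ∧
    Bset ∈ BP μ ∧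
    (∀ k : ℕ, 2 ≤ k →
      (μ (Bset ∩ cyl (sk' k))).toReal / (μ (cyl (sk' k))).toReal = 1 / 2 ∧
      (μ (cyl (sk' k) \ Bset)).toReal / (μ (cyl (sk' k))).toReal = 1 / 2) ∧
    ¬ (∀ ε : ℝ, 0 < ε → ∃ m : ℕ, BalancedAt μ m ε Bset) := by
  have p1 : ∀ n : ℕ, (n : ℝ) * psi μ n Bset = (n : ℝ) / 2 ^ n := by
    intro n
    match n with
    | 0 => simp
    | Nat.succ n =>
      rw [psi_eq hμ (Nat.succ_le_succ (Nat.zero_le n)), div_eq_mul_inv, ← inv_pow]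
  have p2 : Tendsto (fun n : ℕ => (n : ℝ) * psi μ n Bset) atTop (𝓝 0) := by
    have h := tendsto_self_mul_const_pow_of_lt_one (r := (2 : ℝ)⁻¹) (by norm_num) (by norm_num)
    refine h.congr fun n => ?_
    rw [p1 n, div_eq_mul_inv, ← inv_pow]
  refine ⟨p1, p2, ⟨measurable_Bset, p2⟩, fun k hk => density hμ (by omega), ?_⟩
  intro hcon
  obtain ⟨m, hm⟩ := hcon (1 / 2) (by norm_num)
  have h := (hm (sk' m)).1
  rcases Nat.eq_zero_or_pos m with rfl | hm1
  · have hc : cyl (sk' 0) = (Set.univ : Set Cantor) := by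
      ext x
      refine ⟨fun _ => trivial, fun _ i => absurd i.2 (by omega)⟩
    have hB : μ Bset = 2⁻¹ := by
      rw [Bset_eq, meas_Btail hμ le_rfl, show (2:ℕ) = 1 + 1 from rfl, two_mul_inv_pow, pow_one]
    have hD : μ (Set.univ \ Bset) = 2⁻¹ := by
      rw [← Set.compl_eq_univ_diff, measure_compl measurable_Bset (measure_ne_top μ _),
        measure_univ, hB, ENNReal.one_sub_inv_two]
    rw [hc, Set.inter_univ, hB, hD, measure_univ] at h
    rcases h with h | h <;> norm_num [ENNReal.toReal_inv] at h
  · obtain ⟨h1, h2⟩ := density (μ := μ) hμ hm1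
    rw [h1, h2] at h
    have hle : (1 / 2 : ℝ) / (m : ℝ) ≤ 1 / 2 :=
      div_le_self (by norm_num) (by exact_mod_cast hm1)
    rcases h with h | h <;> linarith
end
end
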